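/- arXiv:2002.07285 — 2 statements merged into one kernel-verified Lean document; each statement's English description precedes it below -/
import Mathlib

section
/- Consider the linear Markovian process X_t = A T_{t-1} + B X_{t-1} + η_t, Y_t = θ₀'T_t + μ'X_t + ε_t with exogenous mean-zero shocks, and define the dynamic effects ψ_m = θ₀ and ψ_t = A'(B')^{m-t-1} μ for t < m. Then for each t ∈ {1,...,m}, setting Ȳ_t = Y_m − Σ_{j=t+1}^m ψ_j' T_j, the conditional moment restriction E[Ȳ_t − ψ_t' T_t − μ'B^{m−t} X_t | T_t, X_t] = 0 holds. -/
open MeasureTheory Matrix Finset ProbabilityTheory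

/-!
Unrolling `X_{s+1} = A T_s + B X_s + η_{s+1}` from `t` to `m` and substituting into `Y` turns the
residual `Ȳ_t − ψ_t'T_t − μ'B^{m−t}X_t` into `ε + Σ_{t ≤ j < m} μ'B^{m−j−1}η_{j+1}`: the treatment
contributions `μ'B^{m−j−1}A T_j` are exactly `ψ_j'T_j`. Every remaining shock is mean zero and
independent of `(T_t, X_t)`, so its conditional expectation given `(T_t, X_t)` vanishes.
-/

theorem eq_pow_mulVec_add_sum_of_recursion {n R : Type*} [Fintype n] [DecidableEq n]
    [Semiring R] {B : Matrix n n R} {x u : ℕ → n → R}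
    (hx : ∀ s, x (s + 1) = B *ᵥ x s + u s) {t s : ℕ} (hts : t ≤ s) :
    x s = B ^ (s - t) *ᵥ x t + ∑ j ∈ Ico t s, B ^ (s - j - 1) *ᵥ u j := by
  induction s, hts using Nat.le_induction with
  | base => simp
  | succ s hts ih =>
    have hpow : ∀ j ∈ Ico t s, B * B ^ (s - j - 1) = B ^ (s + 1 - j - 1) := fun j hj => by
      rw [← pow_succ']; congr 1; have := (mem_Ico.mp hj).2; omega
    rw [hx, ih, sum_Ico_succ_top hts, mulVec_add, mulVec_sum, mulVec_mulVec, ← pow_succ',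
      sum_congr rfl fun j hj => by rw [mulVec_mulVec, hpow j hj]]
    simp [Nat.sub_add_comm hts, add_assoc]

theorem linear_markov_residual_eq {n k R : Type*} [Fintype n] [DecidableEq n] [Fintype k]
    [CommRing R] {A : Matrix n k R} {B : Matrix n n R} {θ₀ : k → R} {μv : n → R}
    {X η : ℕ → n → R} {T : ℕ → k → R} {y ε : R} {ψ : ℕ → k → R} {t m : ℕ} (htm : t ≤ m)
    (hX : ∀ s, X (s + 1) = A *ᵥ T s + B *ᵥ X s + η (s + 1))
    (hy : y = θ₀ ⬝ᵥ T m + μv ⬝ᵥ X m + ε)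
    (hψ : ∀ j, ψ j = if j = m then θ₀ else Aᵀ *ᵥ ((Bᵀ ^ (m - j - 1)) *ᵥ μv)) :
    (y - ∑ j ∈ Icc (t + 1) m, ψ j ⬝ᵥ T j) - ψ t ⬝ᵥ T t - μv ⬝ᵥ (B ^ (m - t) *ᵥ X t) =
      ε + ∑ j ∈ Ico t m, (μv ᵥ* B ^ (m - j - 1)) ⬝ᵥ η (j + 1) := by
  have hXm : X m = B ^ (m - t) *ᵥ X t +
      ∑ j ∈ Ico t m, B ^ (m - j - 1) *ᵥ (A *ᵥ T j + η (j + 1)) :=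
    eq_pow_mulVec_add_sum_of_recursion (fun s => by rw [hX]; abel) htm
  have hψT : ∀ j ∈ Ico t m, ψ j ⬝ᵥ T j = μv ⬝ᵥ B ^ (m - j - 1) *ᵥ A *ᵥ T j := fun j hj => by
    rw [hψ, if_neg (mem_Ico.mp hj).2.ne, ← transpose_pow, mulVec_transpose, mulVec_transpose,
      dotProduct_mulVec, dotProduct_mulVec, vecMul_vecMul]
  have hsum : ψ t ⬝ᵥ T t + ∑ j ∈ Icc (t + 1) m, ψ j ⬝ᵥ T j =
      θ₀ ⬝ᵥ T m + ∑ j ∈ Ico t m, ψ j ⬝ᵥ T j := by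
    have hIcc : insert t (Icc (t + 1) m) = Icc t m := by
      rw [Icc_add_one_left_eq_Ioc, Ioc_insert_left htm]
    rw [← sum_insert (f := fun j => ψ j ⬝ᵥ T j) (by simp), hIcc, ← Ico_insert_right htm,
      sum_insert (by simp), hψ m, if_pos rfl]
  rw [sum_congr rfl hψT] at hsum
  rw [hy, hXm]
  simp only [mulVec_add, dotProduct_add, dotProduct_sum, sum_add_distrib,
    dotProduct_mulVec μv (B ^ _)] at hsum ⊢
  linear_combination -hsum

section
variable {Ω : Type*} {m0 : MeasurableSpace Ω} {μ : Measure Ω}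

theorem condExp_comap_ae_eq_zero_of_indepFun [IsFiniteMeasure μ] {γ : Type*}
    {mγ : MeasurableSpace γ} {f : Ω → ℝ} {Z : Ω → γ} (hf : AEStronglyMeasurable f μ)
    (hind : IndepFun f Z μ) (hmean : ∫ ω, f ω ∂μ = 0) :
    μ[f | mγ.comap Z] =ᵐ[μ] 0 := by
  by_cases hZ : mγ.comap Z ≤ m0
  swap
  · rw [condExp_of_not_le hZ]
  set g := hf.mk f
  have hg : Measurable g := hf.stronglyMeasurable_mk.measurable
  have hind_g : IndepFun g Z μ := hind.congr hf.ae_eq_mk .rfl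
  calc μ[f | mγ.comap Z] =ᵐ[μ] μ[g | mγ.comap Z] := condExp_congr_ae hf.ae_eq_mk
    _ =ᵐ[μ] fun _ => ∫ ω, g ω ∂μ :=
      condExp_indep_eq hg.comap_le hZ (comap_measurable g).stronglyMeasurable
        ((IndepFun_iff_Indep g Z μ).mp hind_g)
    _ = 0 := by rw [← integral_congr_ae hf.ae_eq_mk, hmean]; rfl

theorem condExp_sum_ae_eq_zero {ι : Type*} {m : MeasurableSpace Ω} {s : Finset ι}
    {f : ι → Ω → ℝ} (hint : ∀ i ∈ s, Integrable (f i) μ) (h0 : ∀ i ∈ s, μ[f i | m] =ᵐ[μ] 0) :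
    μ[∑ i ∈ s, f i | m] =ᵐ[μ] 0 := by
  filter_upwards [condExp_finsetSum hint m, (ae_ball_iff s.countable_toSet).mpr h0]
    with ω hsum h0ω
  rw [hsum, Finset.sum_apply]
  exact sum_eq_zero h0ω

theorem integrable_dotProduct {ι : Type*} [Fintype ι] (w : ι → ℝ) {V : Ω → ι → ℝ}
    (hV : ∀ i, Integrable (fun ω => V ω i) μ) : Integrable (fun ω => w ⬝ᵥ V ω) μ :=
  integrable_finsetSum _ fun i _ => (hV i).const_mul (w i)

theorem integral_dotProduct {ι : Type*} [Fintype ι] (w : ι → ℝ) {V : Ω → ι → ℝ}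
    (hV : ∀ i, Integrable (fun ω => V ω i) μ) :
    ∫ ω, w ⬝ᵥ V ω ∂μ = w ⬝ᵥ fun i => ∫ ω, V ω i ∂μ := by
  simp only [dotProduct]
  rw [integral_finsetSum _ fun i _ => (hV i).const_mul (w i)]
  simp only [integral_const_mul]

end

theorem linear_markov_conditional_moment_general {Ω : Type*} {m0 : MeasurableSpace Ω}
    (μPr : Measure Ω) [IsProbabilityMeasure μPr]
    {p d : ℕ} (t m : ℕ) (htm : t ≤ m)
    (A : Matrix (Fin p) (Fin d) ℝ) (B : Matrix (Fin p) (Fin p) ℝ)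
    (θ₀ : Fin d → ℝ) (μv : Fin p → ℝ)
    (X η : ℕ → Ω → Fin p → ℝ) (T : ℕ → Ω → Fin d → ℝ) (Y : Ω → ℝ) (ε : Ω → ℝ)
    -- structural equations:
    (hXeq : ∀ s, X (s + 1) = fun ω => A.mulVec (T s ω) + B.mulVec (X s ω) + η (s + 1) ω)
    (hYeq : Y = fun ω => θ₀ ⬝ᵥ T m ω + μv ⬝ᵥ X m ω + ε ω)
    -- shocks after time t are mean zero and independent of (T_t, X_t):
    (hηind : ∀ j, t < j → j ≤ m → IndepFun (η j) (fun ω => (T t ω, X t ω)) μPr)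
    (hεind : IndepFun ε (fun ω => (T t ω, X t ω)) μPr)
    (hηmean : ∀ j i, ∫ ω, η j ω i ∂μPr = 0) (hεmean : ∫ ω, ε ω ∂μPr = 0)
    -- integrability:
    (hηint : ∀ j i, Integrable (fun ω => η j ω i) μPr) (hεint : Integrable ε μPr)
    -- the dynamic treatment effects:
    (ψ : ℕ → Fin d → ℝ)
    (hψ : ∀ j, ψ j = if j = m then θ₀
      else A.transpose.mulVec ((B.transpose ^ (m - j - 1)).mulVec μv)) :
    μPr[(fun ω =>
        (Y ω - ∑ j ∈ Finset.Icc (t + 1) m, ψ j ⬝ᵥ T j ω) - ψ t ⬝ᵥ T t ω -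
          μv ⬝ᵥ ((B ^ (m - t)).mulVec (X t ω)))|
      MeasurableSpace.comap (fun ω => (T t ω, X t ω)) inferInstance] =ᵐ[μPr]
      fun _ => 0 := by
  set shock : ℕ → Ω → ℝ := fun j ω => (μv ᵥ* B ^ (m - j - 1)) ⬝ᵥ η (j + 1) ω
  have hshock_int : ∀ j, Integrable (shock j) μPr := fun j => integrable_dotProduct _ (hηint _)
  have hshock : ∀ j ∈ Ico t m, μPr[shock j | MeasurableSpace.comap (fun ω => (T t ω, X t ω))
      inferInstance] =ᵐ[μPr] 0 := fun j hj =>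
    condExp_comap_ae_eq_zero_of_indepFun (hshock_int j).aestronglyMeasurable
      ((hηind (j + 1) (by grind) (by grind)).comp (φ := fun v => (μv ᵥ* B ^ (m - j - 1)) ⬝ᵥ v)
        (by fun_prop) measurable_id)
      (by simp [shock, integral_dotProduct _ (hηint _), hηmean])
  have hresidual : (fun ω => (Y ω - ∑ j ∈ Finset.Icc (t + 1) m, ψ j ⬝ᵥ T j ω) - ψ t ⬝ᵥ T t ω -
      μv ⬝ᵥ ((B ^ (m - t)).mulVec (X t ω))) = ε + ∑ j ∈ Ico t m, shock j := by
    funext ω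
    rw [Pi.add_apply, Finset.sum_apply]
    exact linear_markov_residual_eq (X := (X · ω)) (T := (T · ω)) (η := (η · ω)) htm
      (fun s => congrFun (hXeq s) ω) (congrFun hYeq ω) hψ
  rw [hresidual]
  filter_upwards [condExp_add hεint (integrable_finsetSum' _ fun j _ => hshock_int j) _,
    condExp_comap_ae_eq_zero_of_indepFun hεint.aestronglyMeasurable hεind hεmean,
    condExp_sum_ae_eq_zero (fun j _ => hshock_int j) hshock] with ω hadd hε hsum
  rw [hadd, Pi.add_apply, hε, hsum]
  simp

/-- Conditional moment restriction for the dynamic effects of the linear Markovian model.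
With `X_{s+1} = A T_s + B X_s + η_{s+1}`, `Y = θ₀'T_m + μ'X_m + ε`, dynamic effects
`ψ_m = θ₀`, `ψ_j = A'(B')^{m−j−1}μ` for `j < m`, and shocks `η_j` (`j > t`) and `ε`
mean zero and independent of `(T_t, X_t)`, one has for each `1 ≤ t ≤ m`, with
`Ȳ_t = Y − Σ_{j=t+1}^m ψ_j'T_j`:
`E[Ȳ_t − ψ_t'T_t − μ'B^{m−t}X_t | T_t, X_t] = 0`. -/
theorem linear_markov_conditional_moment {Ω : Type*} {m0 : MeasurableSpace Ω}
    (μPr : Measure Ω) [IsProbabilityMeasure μPr]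
    {p d : ℕ} (t m : ℕ) (ht : 1 ≤ t) (htm : t ≤ m)
    (A : Matrix (Fin p) (Fin d) ℝ) (B : Matrix (Fin p) (Fin p) ℝ)
    (θ₀ : Fin d → ℝ) (μv : Fin p → ℝ)
    (X η : ℕ → Ω → Fin p → ℝ) (T : ℕ → Ω → Fin d → ℝ) (Y : Ω → ℝ) (ε : Ω → ℝ)
    -- structural equations:
    (hXeq : ∀ s, X (s + 1) = fun ω => A.mulVec (T s ω) + B.mulVec (X s ω) + η (s + 1) ω)
    (hYeq : Y = fun ω => θ₀ ⬝ᵥ T m ω + μv ⬝ᵥ X m ω + ε ω)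
    -- measurability:
    (hXmeas : ∀ s, Measurable (X s)) (hTmeas : ∀ s, Measurable (T s))
    (hηmeas : ∀ s, Measurable (η s)) (hεmeas : Measurable ε)
    -- shocks after time t are mean zero and independent of (T_t, X_t):
    (hηind : ∀ j, t < j → j ≤ m → IndepFun (η j) (fun ω => (T t ω, X t ω)) μPr)
    (hεind : IndepFun ε (fun ω => (T t ω, X t ω)) μPr)
    (hηmean : ∀ j i, ∫ ω, η j ω i ∂μPr = 0) (hεmean : ∫ ω, ε ω ∂μPr = 0)
    -- integrability:
    (hηint : ∀ j i, Integrable (fun ω => η j ω i) μPr) (hεint : Integrable ε μPr)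
    (hTint : ∀ j i, Integrable (fun ω => T j ω i) μPr)
    (hXint : ∀ j i, Integrable (fun ω => X j ω i) μPr)
    (hYint : Integrable Y μPr)
    -- the dynamic treatment effects:
    (ψ : ℕ → Fin d → ℝ)
    (hψ : ∀ j, ψ j = if j = m then θ₀
      else A.transpose.mulVec ((B.transpose ^ (m - j - 1)).mulVec μv)) :
    μPr[(fun ω =>
        (Y ω - ∑ j ∈ Finset.Icc (t + 1) m, ψ j ⬝ᵥ T j ω) - ψ t ⬝ᵥ T t ω -
          μv ⬝ᵥ ((B ^ (m - t)).mulVec (X t ω)))|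
      MeasurableSpace.comap (fun ω => (T t ω, X t ω)) inferInstance] =ᵐ[μPr]
      fun _ => 0 :=
  linear_markov_conditional_moment_general (m0 := m0) μPr t m htm A B θ₀ μv X η T Y ε hXeq hYeq
    hηind hεind hηmean hεmean hηint hεint ψ hψ
end

section
/- In the linear Markovian model, the counterfactual value function satisfies V(τ₁,...,τ_m) = Σ_{t=1}^m ψ_t' τ_t, where ψ_m = θ₀ and ψ_t = A'(B')^{m−t−1} μ for t < m, V(τ) = E[Y_m | do(T=τ)] − E[Y_m | do(T=0)]. -/
/-!
Under a static intervention the shocks enter the counterfactual states `X^{(τ)}` and `X^{(0)}`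
identically, so their difference is the deterministic response `Σ_k B^{k-1} A τ_{m-k}` pathwise,
and `V(τ)` is `θ₀'τ_m` plus `μ'` applied to that response; transposing gives the weights `ψ_t`.
-/

open MeasureTheory Matrix Finset

section LinearResponse

variable {R ι κ : Type*} [Fintype ι] [Fintype κ]

def linearResponse [Semiring R] (A : Matrix ι κ R) (B : Matrix ι ι R) (τ : ℕ → κ → R) :
    ℕ → ι → R
  | 0 => 0
  | s + 1 => A *ᵥ τ s + B *ᵥ linearResponse A B τ s

theorem eq_linearResponse_add [Semiring R] {A : Matrix ι κ R} {B : Matrix ι ι R}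
    {τ : ℕ → κ → R} {x y e : ℕ → ι → R} (hx0 : x 0 = 0) (hy0 : y 0 = 0)
    (hx : ∀ s, x (s + 1) = A *ᵥ τ s + B *ᵥ x s + e (s + 1))
    (hy : ∀ s, y (s + 1) = B *ᵥ y s + e (s + 1)) :
    ∀ s, x s = linearResponse A B τ s + y s
  | 0 => by rw [hx0, hy0, linearResponse, add_zero]
  | s + 1 => by
    rw [hx, hy, linearResponse, eq_linearResponse_add hx0 hy0 hx hy s, mulVec_add]
    abel

theorem linearResponse_eq_sum [Semiring R] [DecidableEq ι] (A : Matrix ι κ R)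
    (B : Matrix ι ι R) (τ : ℕ → κ → R) :
    ∀ m, linearResponse A B τ m = ∑ s ∈ range m, (B ^ (m - s - 1) * A) *ᵥ τ s
  | 0 => rfl
  | m + 1 => by
    rw [linearResponse, linearResponse_eq_sum A B τ m, sum_range_succ, mulVec_sum, add_comm]
    congr 1
    · refine sum_congr rfl fun s hs => ?_
      have hexp : m + 1 - s - 1 = m - s - 1 + 1 := by have := mem_range.mp hs; omega
      rw [mulVec_mulVec, ← Matrix.mul_assoc, ← pow_succ', hexp]
    · simp

theorem dotProduct_linearResponse [CommSemiring R] [DecidableEq ι] (A : Matrix ι κ R)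
    (B : Matrix ι ι R) (τ : ℕ → κ → R) (m : ℕ) (v : ι → R) :
    v ⬝ᵥ linearResponse A B τ m = ∑ s ∈ range m, (Aᵀ *ᵥ ((Bᵀ ^ (m - s - 1)) *ᵥ v)) ⬝ᵥ τ s := by
  simp only [linearResponse_eq_sum, dotProduct_sum, dotProduct_mulVec, ← mulVec_transpose,
    transpose_mul, transpose_pow, mulVec_mulVec]

def dynamicEffect [Semiring R] [DecidableEq ι] (A : Matrix ι κ R) (B : Matrix ι ι R)
    (θ₀ : κ → R) (v : ι → R) (m j : ℕ) : κ → R :=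
  if j = m then θ₀ else Aᵀ *ᵥ ((Bᵀ ^ (m - j - 1)) *ᵥ v)

theorem sum_Icc_dynamicEffect_dotProduct [CommSemiring R] [DecidableEq ι] (A : Matrix ι κ R)
    (B : Matrix ι ι R) (θ₀ : κ → R) (v : ι → R) {τ : ℕ → κ → R} (hτ0 : τ 0 = 0) (m : ℕ) :
    ∑ j ∈ Icc 1 m, dynamicEffect A B θ₀ v m j ⬝ᵥ τ j =
      θ₀ ⬝ᵥ τ m + v ⬝ᵥ linearResponse A B τ m := by
  have hsplit : ∑ j ∈ range (m + 1), dynamicEffect A B θ₀ v m j ⬝ᵥ τ j =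
      ∑ j ∈ Icc 1 m, dynamicEffect A B θ₀ v m j ⬝ᵥ τ j := by
    rw [range_eq_Ico, sum_eq_sum_Ico_succ_bot m.succ_pos, hτ0, dotProduct_zero, zero_add, zero_add,
      Nat.succ_eq_add_one, Ico_add_one_right_eq_Icc]
  rw [← hsplit, sum_range_succ, dynamicEffect, if_pos rfl, add_comm, dotProduct_linearResponse]
  refine congrArg _ (sum_congr rfl fun j hj => ?_)
  rw [dynamicEffect, if_neg (mem_range.mp hj).ne]

end LinearResponse

section Integrability

variable {Ω ι : Type*} [MeasurableSpace Ω] {P : Measure Ω} [Fintype ι]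

theorem integrable_const_dotProduct {f : Ω → ι → ℝ} (hf : ∀ i, Integrable (fun ω => f ω i) P)
    (v : ι → ℝ) : Integrable (fun ω => v ⬝ᵥ f ω) P := by
  simpa only [dotProduct] using integrable_finsetSum univ fun i _ => (hf i).const_mul (v i)

theorem integrable_of_linear_recurrence [IsFiniteMeasure P] (c : ℕ → ι → ℝ) (B : Matrix ι ι ℝ)
    {X e : ℕ → Ω → ι → ℝ} (he : ∀ s i, Integrable (fun ω => e s ω i) P) (h0 : X 0 = 0)
    (hrec : ∀ s, X (s + 1) = fun ω => c s + B *ᵥ X s ω + e (s + 1) ω) :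
    ∀ s i, Integrable (fun ω => X s ω i) P
  | 0, i => by simp [h0]
  | s + 1, i => by
    rw [hrec]
    exact ((integrable_const _).add (integrable_const_dotProduct
      (integrable_of_linear_recurrence c B he h0 hrec s) (B i))).add (he (s + 1) i)

end Integrability

theorem counterfactual_value_linear_general {Ω : Type*} {m0 : MeasurableSpace Ω}
    (μPr : Measure Ω) [IsProbabilityMeasure μPr]
    {p d : ℕ} (m : ℕ)
    (A : Matrix (Fin p) (Fin d) ℝ) (B : Matrix (Fin p) (Fin p) ℝ)
    (θ₀ : Fin d → ℝ) (μv : Fin p → ℝ)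
    (η : ℕ → Ω → Fin p → ℝ) (ε : Ω → ℝ)
    (hηint : ∀ s i, Integrable (fun ω => η s ω i) μPr)
    (hεint : Integrable ε μPr)
    -- the counterfactual state process under a static intervention τ:
    (Xc : (ℕ → Fin d → ℝ) → ℕ → Ω → Fin p → ℝ)
    (hXc0 : ∀ τ, Xc τ 0 = fun _ _ => 0)
    (hXcrec : ∀ τ s, Xc τ (s + 1) =
      fun ω => A.mulVec (τ s) + B.mulVec (Xc τ s ω) + η (s + 1) ω)
    -- the dynamic treatment effects:
    (ψ : ℕ → Fin d → ℝ)
    (hψ : ∀ j, ψ j = if j = m then θ₀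
      else A.transpose.mulVec ((B.transpose ^ (m - j - 1)).mulVec μv))
    (τ : ℕ → Fin d → ℝ) (hτ0 : τ 0 = fun _ => 0) :
    (∫ ω, (θ₀ ⬝ᵥ τ m + μv ⬝ᵥ Xc τ m ω + ε ω) ∂μPr) -
      (∫ ω, (θ₀ ⬝ᵥ (fun _ => (0 : ℝ)) + μv ⬝ᵥ Xc (fun _ _ => 0) m ω + ε ω) ∂μPr) =
      ∑ s ∈ Finset.Icc 1 m, ψ s ⬝ᵥ τ s := by
  obtain rfl : ψ = dynamicEffect A B θ₀ μv m := funext hψ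
  have hresp : ∀ ω, Xc τ m ω = linearResponse A B τ m + Xc (fun _ _ => 0) m ω := fun ω =>
    eq_linearResponse_add (x := fun s => Xc τ s ω) (y := fun s => Xc (fun _ _ => 0) s ω)
      (e := fun s => η s ω) (congrFun (hXc0 τ) ω) (congrFun (hXc0 _) ω)
      (fun s => congrFun (hXcrec τ s) ω)
      (fun s => by simpa [← Pi.zero_def] using congrFun (hXcrec (fun _ _ => 0) s) ω) m
  have hint : Integrable
      (fun ω => θ₀ ⬝ᵥ (fun _ => (0 : ℝ)) + μv ⬝ᵥ Xc (fun _ _ => 0) m ω + ε ω) μPr :=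
    ((integrable_const _).add (integrable_const_dotProduct
      (integrable_of_linear_recurrence _ B hηint (hXc0 _) (hXcrec _) m) μv)).add hεint
  have hshift : ∀ ω, θ₀ ⬝ᵥ τ m + μv ⬝ᵥ Xc τ m ω + ε ω =
      (θ₀ ⬝ᵥ τ m + μv ⬝ᵥ linearResponse A B τ m) +
        (θ₀ ⬝ᵥ (fun _ => (0 : ℝ)) + μv ⬝ᵥ Xc (fun _ _ => 0) m ω + ε ω) := fun ω => by
    rw [hresp, dotProduct_add, dotProduct_zero']
    ring
  simp_rw [hshift]
  rw [integral_add (integrable_const _) hint, integral_const, probReal_univ, one_smul,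
    add_sub_cancel_right, sum_Icc_dynamicEffect_dotProduct A B θ₀ μv hτ0]

/-- Characterization of the counterfactual value function in the linear Markovian
model: `V(τ₁,…,τ_m) = Σ_{t=1}^m ψ_t'τ_t`, where `ψ_m = θ₀`, `ψ_t = A'(B')^{m−t−1}μ`
for `t < m`, and `V(τ) = E[Y_m | do(T = τ)] − E[Y_m | do(T = 0)]`.  The counterfactual
state process under a static intervention `τ` is `Xc τ`, given by `Xc τ 0 = 0` and
`Xc τ (s+1) = A τ_s + B (Xc τ s) + η_{s+1}`, and the counterfactual final outcome is
`Y_m^{(τ)} = θ₀'τ_m + μ'(Xc τ m) + ε_m` with mean-zero integrable shocks. -/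
theorem counterfactual_value_linear {Ω : Type*} {m0 : MeasurableSpace Ω}
    (μPr : Measure Ω) [IsProbabilityMeasure μPr]
    {p d : ℕ} (m : ℕ) (hm : 1 ≤ m)
    (A : Matrix (Fin p) (Fin d) ℝ) (B : Matrix (Fin p) (Fin p) ℝ)
    (θ₀ : Fin d → ℝ) (μv : Fin p → ℝ)
    (η : ℕ → Ω → Fin p → ℝ) (ε : Ω → ℝ)
    (hηint : ∀ s i, Integrable (fun ω => η s ω i) μPr)
    (hηmean : ∀ s i, ∫ ω, η s ω i ∂μPr = 0)
    (hεint : Integrable ε μPr) (hεmean : ∫ ω, ε ω ∂μPr = 0)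
    -- the counterfactual state process under a static intervention τ:
    (Xc : (ℕ → Fin d → ℝ) → ℕ → Ω → Fin p → ℝ)
    (hXc0 : ∀ τ, Xc τ 0 = fun _ _ => 0)
    (hXcrec : ∀ τ s, Xc τ (s + 1) =
      fun ω => A.mulVec (τ s) + B.mulVec (Xc τ s ω) + η (s + 1) ω)
    -- the dynamic treatment effects:
    (ψ : ℕ → Fin d → ℝ)
    (hψ : ∀ j, ψ j = if j = m then θ₀
      else A.transpose.mulVec ((B.transpose ^ (m - j - 1)).mulVec μv))
    (τ : ℕ → Fin d → ℝ) (hτ0 : τ 0 = fun _ => 0) :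
    (∫ ω, (θ₀ ⬝ᵥ τ m + μv ⬝ᵥ Xc τ m ω + ε ω) ∂μPr) -
      (∫ ω, (θ₀ ⬝ᵥ (fun _ => (0 : ℝ)) + μv ⬝ᵥ Xc (fun _ _ => 0) m ω + ε ω) ∂μPr) =
      ∑ s ∈ Finset.Icc 1 m, ψ s ⬝ᵥ τ s :=
  counterfactual_value_linear_general (m0 := m0) μPr m A B θ₀ μv η ε hηint hεint Xc hXc0 hXcrec ψ hψ
    τ hτ0
end
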